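/- arXiv:1305.2635 — 3 statements merged into one kernel-verified Lean document; each statement's English description precedes it below -/
import Mathlib

section
/- Consider the system of n integral equations u_i(x,t) = u_{0,i}(γ_i(x,t,0)) + ∫₀ᵗ [ Σ_{k=1}^n f_{ik}(γ_i(x,t,τ),τ)·u_k(γ_i(x,t,τ),τ) + a_i(γ_i(x,t,τ),τ) ] dτ for continuous u = (u_1,…,u_n) on a compact domain of determinacy K_T, where γ_i(x,t,τ) ∈ K_τ whenever (x,t) ∈ K_T and 0 ≤ τ ≤ t ≤ T. Then sup_{(x,t)∈K_T} max_i |u_i(x,t)| ≤ [ T·sup_k sup_{K_T} |a_k| + sup_k sup_{K₀} |u_{0,k}| ] · exp( n · sup_{i,k} sup_{K_T} |f_{ik}| · T ). -/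
/-!
Along each characteristic the integrand is bounded by `n F b(τ) + A` as soon as every `|u_k|` is
bounded by `b` at time `τ`, so any continuous bound `b` in time improves to
`T A + U₀ + n F ∫₀ᵗ b`. Starting from the crude bound `M = sup |u|` (compactness), `N` such
improvements give `(T A + U₀) e^{nFt} + M (nFt)^N / N!`, and the last term tends to `0`.
-/

open MeasureTheory Set Filter Topology Real
open scoped Nat

/-- The bound obtained from `w ≤ M` after `N` substitutions into `w ≤ C + K ∫₀ˢ w`; one more
substitution reproduces it with `N + 1`. -/
noncomputable def picardBound (C M K : ℝ) (N : ℕ) (s : ℝ) : ℝ :=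
  C * exp (K * s) + M * (K * s) ^ N / N !

lemma continuous_picardBound (C M K : ℝ) (N : ℕ) : Continuous (picardBound C M K N) := by
  unfold picardBound
  fun_prop

lemma hasDerivAt_picardBound_succ (C M K : ℝ) (N : ℕ) (τ : ℝ) :
    HasDerivAt (picardBound C M K (N + 1)) (K * picardBound C M K N τ) τ := by
  have hlin : HasDerivAt (fun y => K * y) K τ := by simpa using (hasDerivAt_id τ).const_mul K
  refine ((hlin.exp.const_mul C).add
    ((hlin.pow (N + 1)).const_mul M |>.div_const ((N + 1)! : ℝ))).congr_deriv ?_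
  rw [picardBound, Nat.factorial_succ, Nat.add_sub_cancel]
  push_cast
  field_simp

lemma add_mul_integral_picardBound (C M K : ℝ) (N : ℕ) (s : ℝ) :
    C + K * ∫ τ in (0:ℝ)..s, picardBound C M K N τ = picardBound C M K (N + 1) s := by
  rw [← intervalIntegral.integral_const_mul,
    intervalIntegral.integral_eq_sub_of_hasDerivAt (fun τ _ => hasDerivAt_picardBound_succ C M K N τ)
      ((continuous_const.mul (continuous_picardBound C M K N)).intervalIntegrable _ _)]
  simp [picardBound]

lemma tendsto_picardBound (C M K s : ℝ) :
    Tendsto (fun N => picardBound C M K N s) atTop (𝓝 (C * exp (K * s))) := by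
  have h := (FloorSemiring.tendsto_pow_div_factorial_atTop (K * s)).const_mul M
  rw [mul_zero] at h
  simpa [picardBound, mul_div_assoc] using h.const_add (C * exp (K * s))

/-- Gronwall's inequality for an integral inequality known only to propagate continuous bounds,
so that no measurability of `w` along `s` is needed. -/
theorem le_mul_exp_of_le_add_mul_integral {ι : Type*} {w s : ι → ℝ} {C K M : ℝ} (hC : 0 ≤ C)
    (hM : ∀ j, w j ≤ M)
    (hstep : ∀ b : ℝ → ℝ, Continuous b → (∀ j, w j ≤ b (s j)) →
      ∀ j, w j ≤ C + K * ∫ τ in (0:ℝ)..s j, b τ) (j : ι) :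
    w j ≤ C * exp (K * s j) := by
  have hiter : ∀ N j, w j ≤ picardBound C M K N (s j) := by
    intro N
    induction N with
    | zero =>
      intro j
      simpa [picardBound] using add_le_add (mul_nonneg hC (exp_pos (K * s j)).le) (hM j)
    | succ N ih =>
      intro j
      rw [← add_mul_integral_picardBound]
      exact hstep _ (continuous_picardBound C M K N) ih j
  exact ge_of_tendsto' (tendsto_picardBound C M K (s j)) fun N => hiter N j

lemma abs_sum_mul_add_le {ι : Type*} [Fintype ι] {f v : ι → ℝ} {c F B A : ℝ}
    (hf : ∀ k, |f k| ≤ F) (hv : ∀ k, |v k| ≤ B) (hc : |c| ≤ A) (hF : 0 ≤ F) :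
    |∑ k, f k * v k + c| ≤ Fintype.card ι * F * B + A := by
  calc |∑ k, f k * v k + c| ≤ ∑ k, |f k| * |v k| + |c| := by
        refine (abs_add_le _ _).trans (add_le_add_left ?_ _)
        simpa only [abs_mul] using Finset.abs_sum_le_sum_abs (fun k => f k * v k) Finset.univ
    _ ≤ ∑ _k : ι, F * B + A :=
        add_le_add (Finset.sum_le_sum fun k _ => mul_le_mul (hf k) (hv k) (abs_nonneg _) hF) hc
    _ = Fintype.card ι * F * B + A := by simp [mul_assoc]

lemma abs_add_integral_le {c U t T K A : ℝ} {g b : ℝ → ℝ} (hc : |c| ≤ U) (ht : 0 ≤ t)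
    (htT : t ≤ T) (hA : 0 ≤ A) (hb : Continuous b) (hg : ∀ τ ∈ Icc 0 t, |g τ| ≤ K * b τ + A) :
    |c + ∫ τ in (0:ℝ)..t, g τ| ≤ T * A + U + K * ∫ τ in (0:ℝ)..t, b τ := by
  have hbound : ‖∫ τ in (0:ℝ)..t, g τ‖ ≤ ∫ τ in (0:ℝ)..t, (K * b τ + A) :=
    intervalIntegral.norm_integral_le_of_norm_le ht
      (ae_of_all _ fun τ hτ => hg τ (Ioc_subset_Icc_self hτ))
      ((by fun_prop : Continuous fun τ => K * b τ + A).intervalIntegrable 0 t)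
  rw [intervalIntegral.integral_add ((hb.intervalIntegrable 0 t).const_mul _)
    intervalIntegrable_const, intervalIntegral.integral_const_mul,
    intervalIntegral.integral_const, smul_eq_mul] at hbound
  have hAt : t * A ≤ T * A := mul_le_mul_of_nonneg_right htT hA
  linarith [abs_add_le c (∫ τ in (0:ℝ)..t, g τ), Real.norm_eq_abs (∫ τ in (0:ℝ)..t, g τ)]

theorem apriori_estimate_system_general (n : ℕ) (T A U₀ F : ℝ)
    (KT : Set (ℝ × ℝ)) (hKT : IsCompact KT)
    (hKTt : ∀ p ∈ KT, 0 ≤ p.2 ∧ p.2 ≤ T)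
    (u : Fin n → ℝ × ℝ → ℝ) (u₀ : Fin n → ℝ → ℝ)
    (f : Fin n → Fin n → ℝ × ℝ → ℝ) (a : Fin n → ℝ × ℝ → ℝ)
    (γ : Fin n → ℝ → ℝ → ℝ → ℝ)
    (hu : ∀ i, ContinuousOn (u i) KT)
    (hγ : ∀ i, ∀ x t τ : ℝ, (x, t) ∈ KT → 0 ≤ τ → τ ≤ t → (γ i x t τ, τ) ∈ KT)
    (hrepr : ∀ i, ∀ x t : ℝ, (x, t) ∈ KT →
      u i (x, t) = u₀ i (γ i x t 0) +
        ∫ τ in (0:ℝ)..t,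
          ((∑ k : Fin n, f i k (γ i x t τ, τ) * u k (γ i x t τ, τ)) +
            a i (γ i x t τ, τ)))
    (hA : ∀ i, ∀ p ∈ KT, |a i p| ≤ A)
    (hU₀ : ∀ i, ∀ y : ℝ, (y, (0:ℝ)) ∈ KT → |u₀ i y| ≤ U₀)
    (hF : ∀ i k, ∀ p ∈ KT, |f i k p| ≤ F) :
    ∀ i, ∀ p ∈ KT, |u i p| ≤ (T * A + U₀) * Real.exp (n * F * T) := by
  intro i p hp
  obtain ⟨hp0, hpT⟩ := hKTt p hp
  have hF0 : 0 ≤ F := (abs_nonneg _).trans (hF i i p hp)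
  have hA0 : 0 ≤ A := (abs_nonneg _).trans (hA i p hp)
  have hU₀0 : 0 ≤ U₀ := (abs_nonneg _).trans (hU₀ i _ (hγ i p.1 p.2 0 hp le_rfl hp0))
  have hC : 0 ≤ T * A + U₀ := add_nonneg (mul_nonneg (hp0.trans hpT) hA0) hU₀0
  obtain ⟨M, hM⟩ : ∃ M, ∀ k, ∀ q ∈ KT, |u k q| ≤ M := by
    choose B hB using fun k => hKT.exists_bound_of_continuousOn (hu k)
    obtain ⟨M, hM⟩ := Finite.exists_le B
    exact ⟨M, fun k q hq => (hB k q hq).trans (hM k)⟩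
  have hstep : ∀ b : ℝ → ℝ, Continuous b → (∀ k, ∀ q ∈ KT, |u k q| ≤ b q.2) →
      ∀ k, ∀ q ∈ KT, |u k q| ≤ (T * A + U₀) + n * F * ∫ τ in (0:ℝ)..q.2, b τ := by
    rintro b hb hbu k ⟨x, t⟩ hq
    obtain ⟨ht0, htT⟩ := hKTt _ hq
    rw [hrepr k x t hq]
    refine abs_add_integral_le (hU₀ k _ (hγ k x t 0 hq le_rfl ht0)) ht0 htT hA0 hb fun τ hτ => ?_
    have hmem := hγ k x t τ hq hτ.1 hτ.2
    simpa using abs_sum_mul_add_le (fun j => hF k j _ hmem) (fun j => hbu j _ hmem)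
      (hA k _ hmem) hF0
  have hgronwall := le_mul_exp_of_le_add_mul_integral (w := fun j : Fin n × KT => |u j.1 j.2|)
    (s := fun j => (j.2 : ℝ × ℝ).2) hC (fun j => hM j.1 j.2 j.2.2)
    (fun b hb hbu j => hstep b hb (fun k q hq => hbu (k, ⟨q, hq⟩)) j.1 j.2 j.2.2) (i, ⟨p, hp⟩)
  exact hgronwall.trans (mul_le_mul_of_nonneg_left (exp_le_exp.2 (by gcongr)) hC)

/-- A priori estimate for the system of integral equations along characteristics:
`sup_{K_T} max_i |u_i| ≤ (T·sup|a| + sup|u₀|) · exp(n · sup|f| · T)`. -/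
theorem apriori_estimate_system (n : ℕ) (T A U₀ F : ℝ) (hT : 0 < T)
    (KT : Set (ℝ × ℝ)) (hKT : IsCompact KT)
    (hKTt : ∀ p ∈ KT, 0 ≤ p.2 ∧ p.2 ≤ T)
    (u : Fin n → ℝ × ℝ → ℝ) (u₀ : Fin n → ℝ → ℝ)
    (f : Fin n → Fin n → ℝ × ℝ → ℝ) (a : Fin n → ℝ × ℝ → ℝ)
    (γ : Fin n → ℝ → ℝ → ℝ → ℝ)
    (hu : ∀ i, ContinuousOn (u i) KT)
    (hγ : ∀ i, ∀ x t τ : ℝ, (x, t) ∈ KT → 0 ≤ τ → τ ≤ t → (γ i x t τ, τ) ∈ KT)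
    (hrepr : ∀ i, ∀ x t : ℝ, (x, t) ∈ KT →
      u i (x, t) = u₀ i (γ i x t 0) +
        ∫ τ in (0:ℝ)..t,
          ((∑ k : Fin n, f i k (γ i x t τ, τ) * u k (γ i x t τ, τ)) +
            a i (γ i x t τ, τ)))
    (hA : ∀ i, ∀ p ∈ KT, |a i p| ≤ A)
    (hU₀ : ∀ i, ∀ y : ℝ, (y, (0:ℝ)) ∈ KT → |u₀ i y| ≤ U₀)
    (hF : ∀ i k, ∀ p ∈ KT, |f i k p| ≤ F) :
    ∀ i, ∀ p ∈ KT, |u i p| ≤ (T * A + U₀) * Real.exp (n * F * T) :=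
  apriori_estimate_system_general n T A U₀ F KT hKT hKTt u u₀ f a γ hu hγ hrepr hA hU₀ hF
end

section
/- Let c_L, c_R > 0, x₀ > 0, c(x) = c_L for x < x₀ and c(x) = c_R for x > x₀. Let c^ε be any C¹ regularization of c with c_min ≤ c^ε ≤ M everywhere (0 < c_min ≤ min(c_L,c_R), M ≥ max(c_L,c_R)) and c^ε(x) = c(x) for |x − x₀| ≥ η_ε, where η_ε → 0 as ε → 0. Let γ₁^ε(x,t,·) solve dγ/dτ = c^ε(γ(τ)) with γ(t) = x. Then for every fixed (x,t) with x > x₀ and t > (x − x₀)/c_R, one has lim_{ε→0} γ₁^ε(x,t,0) = −c_L t + (c_L/c_R)(x − x₀) + x₀ = γ₁(x,t,0). -/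
open Filter

set_option maxHeartbeats 1000000 in
/-- Key quantitative estimate: for one fixed regularization with layer half-width `h`
small enough, the backward characteristic at time `0` is within `O(h)` of the broken
characteristic value. -/
lemma key_estimate
    (cL cR x₀ cmin M x t : ℝ)
    (hcmin : 0 < cmin) (hcminL : cmin ≤ cL) (hcminR : cmin ≤ cR)
    (hMR : cR ≤ M)
    (hx : x₀ < x) (ht : (x - x₀) / cR < t)
    (c : ℝ → ℝ) (h : ℝ) (g : ℝ → ℝ)
    (hbd : ∀ y : ℝ, cmin ≤ c y ∧ c y ≤ M)
    (hpos : 0 < h)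
    (hceq : ∀ y : ℝ, h ≤ |y - x₀| → c y = if y < x₀ then cL else cR)
    (hgt : g t = x)
    (hode : ∀ τ : ℝ, HasDerivAt g (c (g τ)) τ)
    (hh1 : h < x - x₀) (hh2 : h < cmin * (t - (x - x₀) / cR) / 2) :
    |g 0 - (-cL * t + (cL / cR) * (x - x₀) + x₀)| ≤ (1 + cL / cR + 2 * cL / cmin) * h := by
  have hcR : 0 < cR := hcmin.trans_le hcminR
  have hcL : 0 < cL := hcmin.trans_le hcminL
  have hM : 0 < M := hcmin.trans_le (hcminR.trans hMR)
  have hdiff : Differentiable ℝ g := fun τ => (hode τ).differentiableAt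
  have hcont : Continuous g := hdiff.continuous
  have hmono : StrictMono g := by
    apply strictMono_of_deriv_pos
    intro τ
    rw [(hode τ).deriv]
    exact hcmin.trans_le (hbd _).1
  -- mean value slopes
  have slope : ∀ a b : ℝ, a < b → ∃ ξ, a < ξ ∧ ξ < b ∧ c (g ξ) * (b - a) = g b - g a := by
    intro a b hab
    obtain ⟨ξ, hξ, hs⟩ := exists_hasDerivAt_eq_slope g (fun τ => c (g τ)) hab
      hcont.continuousOn (fun τ _ => hode τ)
    refine ⟨ξ, hξ.1, hξ.2, ?_⟩
    rw [hs, div_mul_cancel₀ _ (sub_ne_zero.2 hab.ne')]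
  have lb : ∀ a b : ℝ, a ≤ b → cmin * (b - a) ≤ g b - g a := by
    intro a b hab
    rcases eq_or_lt_of_le hab with rfl | hab
    · simp
    · obtain ⟨ξ, _, _, hs⟩ := slope a b hab
      nlinarith [(hbd (g ξ)).1, sub_pos.2 hab]
  -- existence of τ₁ with g τ₁ = x₀ + h
  set a₀ : ℝ := t - (x - x₀ - h) / cmin with ha₀
  have ha₀t : a₀ ≤ t := by
    have h1 : 0 ≤ (x - x₀ - h) / cmin := div_nonneg (by linarith) hcmin.le
    rw [ha₀]; linarith
  have hga₀ : g a₀ ≤ x₀ + h := by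
    have h1 := lb a₀ t ha₀t
    have e : t - a₀ = (x - x₀ - h) / cmin := by rw [ha₀]; ring
    rw [e, mul_div_cancel₀ _ hcmin.ne', hgt] at h1
    linarith
  obtain ⟨τ₁, hτ₁mem, hgτ₁⟩ := intermediate_value_Icc ha₀t hcont.continuousOn
    (Set.mem_Icc.2 ⟨hga₀, by rw [hgt]; linarith⟩)
  have hτ₁t : τ₁ < t := by
    have : g τ₁ < g t := by rw [hgτ₁, hgt]; linarith
    exact hmono.lt_iff_lt.1 this
  -- identify τ₁ : cR * (t - τ₁) = x - x₀ - h
  have hτ₁eq : cR * (t - τ₁) = x - x₀ - h := by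
    obtain ⟨ξ, hξ1, hξ2, hs⟩ := slope τ₁ t hτ₁t
    have hgξ : x₀ + h < g ξ := by rw [← hgτ₁]; exact hmono hξ1
    have hcξ : c (g ξ) = cR := by
      rw [hceq (g ξ) (by rw [abs_of_pos (by linarith)]; linarith)]
      rw [if_neg (by linarith)]
    rw [hcξ, hgt, hgτ₁] at hs
    linarith
  -- existence of τ₂ with g τ₂ = x₀ - h
  set b₀ : ℝ := τ₁ - 2 * h / cmin with hb₀
  have hb₀τ₁ : b₀ ≤ τ₁ := by
    have h1 : 0 ≤ 2 * h / cmin := by positivity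
    rw [hb₀]; linarith
  have hgb₀ : g b₀ ≤ x₀ - h := by
    have h1 := lb b₀ τ₁ hb₀τ₁
    have e : τ₁ - b₀ = 2 * h / cmin := by rw [hb₀]; ring
    rw [e, mul_div_cancel₀ _ hcmin.ne', hgτ₁] at h1
    linarith
  obtain ⟨τ₂, hτ₂mem, hgτ₂⟩ := intermediate_value_Icc hb₀τ₁ hcont.continuousOn
    (Set.mem_Icc.2 ⟨hgb₀, by rw [hgτ₁]; linarith⟩)
  have hτ₂τ₁ : τ₂ < τ₁ := by
    have : g τ₂ < g τ₁ := by rw [hgτ₂, hgτ₁]; linarith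
    exact hmono.lt_iff_lt.1 this
  have hτ₂lb : cmin * (τ₁ - τ₂) ≤ 2 * h := by
    have h1 : τ₁ - 2 * h / cmin ≤ τ₂ := hτ₂mem.1
    have h2 : cmin * (τ₁ - τ₂) ≤ cmin * (2 * h / cmin) :=
      mul_le_mul_of_nonneg_left (by linarith) hcmin.le
    rwa [mul_div_cancel₀ _ hcmin.ne'] at h2
  -- τ₂ > 0
  have hD : cR * ((x - x₀) / cR) = x - x₀ := mul_div_cancel₀ _ hcR.ne'
  have hτ₁gt : t - (x - x₀) / cR < τ₁ := by
    have h1 : cR * (t - τ₁) < cR * ((x - x₀) / cR) := by rw [hD]; linarith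
    have h2 := (mul_lt_mul_iff_right₀ hcR).1 h1
    linarith
  have hτ₂pos : 0 < τ₂ := by
    have h1 : cmin * (t - (x - x₀) / cR) < cmin * τ₁ :=
      mul_lt_mul_of_pos_left hτ₁gt hcmin
    have h2 : 0 < cmin * τ₂ := by nlinarith
    nlinarith [h2]
  -- g 0 = x₀ - h - cL * τ₂
  have hg0 : g 0 = x₀ - h - cL * τ₂ := by
    obtain ⟨ξ, hξ1, hξ2, hs⟩ := slope 0 τ₂ hτ₂pos
    have hgξ : g ξ < x₀ - h := by rw [← hgτ₂]; exact hmono hξ2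
    have hcξ : c (g ξ) = cL := by
      rw [hceq (g ξ) (by rw [abs_of_neg (by linarith)]; linarith)]
      rw [if_pos (by linarith)]
    rw [hcξ, hgτ₂] at hs
    linarith
  -- final arithmetic
  have eX : x - x₀ = cR * (t - τ₁) + h := by linarith
  have hcLcR : cL / cR * (x - x₀) = cL * (t - τ₁) + cL / cR * h := by
    rw [eX, mul_add, ← mul_assoc, div_mul_cancel₀ cL hcR.ne']
  have hKey0 : 0 ≤ cL * (τ₁ - τ₂) := mul_nonneg hcL.le (by linarith)
  have hKey1 : cL * (τ₁ - τ₂) ≤ 2 * cL / cmin * h := by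
    rw [div_mul_eq_mul_div, le_div_iff₀ hcmin]
    nlinarith [mul_le_mul_of_nonneg_left hτ₂lb hcL.le]
  have hq0 : 0 ≤ cL / cR * h := by positivity
  have hp0 : 0 ≤ 2 * cL / cmin * h := by positivity
  rw [hg0, abs_le]
  constructor
  · linarith [hKey0, hKey1, hq0, hp0, hcLcR]
  · linarith [hKey0, hKey1, hq0, hp0, hcLcR]

/-- Characteristics of the regularized speed `c^ε` converge pointwise to the broken
characteristic of the discontinuous speed `c`. -/
theorem regularized_characteristics_converge
    (cL cR x₀ cmin M x t : ℝ)
    (hcmin : 0 < cmin) (hcminL : cmin ≤ cL) (hcminR : cmin ≤ cR)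
    (hML : cL ≤ M) (hMR : cR ≤ M) (hx₀ : 0 < x₀)
    (hx : x₀ < x) (ht : (x - x₀) / cR < t)
    (cfun : ℝ → ℝ → ℝ) (η : ℝ → ℝ)
    (hcC1 : ∀ ε ∈ Set.Ioo (0:ℝ) 1, ContDiff ℝ 1 (cfun ε))
    (hcbd : ∀ ε ∈ Set.Ioo (0:ℝ) 1, ∀ y : ℝ, cmin ≤ cfun ε y ∧ cfun ε y ≤ M)
    (hηpos : ∀ ε ∈ Set.Ioo (0:ℝ) 1, 0 < η ε)
    (hη : Tendsto η (nhdsWithin 0 (Set.Ioi 0)) (nhds 0))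
    (hceq : ∀ ε ∈ Set.Ioo (0:ℝ) 1, ∀ y : ℝ, η ε ≤ |y - x₀| →
      cfun ε y = if y < x₀ then cL else cR)
    (γ : ℝ → ℝ → ℝ)
    (hγt : ∀ ε ∈ Set.Ioo (0:ℝ) 1, γ ε t = x)
    (hγode : ∀ ε ∈ Set.Ioo (0:ℝ) 1, ∀ τ : ℝ, HasDerivAt (γ ε) (cfun ε (γ ε τ)) τ) :
    Tendsto (fun ε => γ ε 0) (nhdsWithin 0 (Set.Ioi 0))
      (nhds (-cL * t + (cL / cR) * (x - x₀) + x₀)) := by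
  have hcR : 0 < cR := hcmin.trans_le hcminR
  have hcL : 0 < cL := hcmin.trans_le hcminL
  set K : ℝ := 1 + cL / cR + 2 * cL / cmin with hK
  have hKpos : 0 < K := by positivity
  set T : ℝ := t - (x - x₀) / cR with hT
  have hTpos : 0 < T := by rw [hT]; linarith
  rw [Metric.tendsto_nhds]
  intro δ hδ
  set r : ℝ := min (min (x - x₀) (cmin * T / 2)) (δ / K) with hr
  have hrpos : 0 < r := by
    apply lt_min (lt_min (by linarith) (by positivity)) (by positivity)
  have hIoo : ∀ᶠ ε in nhdsWithin (0:ℝ) (Set.Ioi 0), ε ∈ Set.Ioo (0:ℝ) 1 :=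
    Ioo_mem_nhdsGT_of_mem (Set.mem_Ico.2 ⟨le_refl 0, one_pos⟩)
  have hsmall : ∀ᶠ ε in nhdsWithin (0:ℝ) (Set.Ioi 0), η ε < r :=
    hη (Iio_mem_nhds hrpos)
  filter_upwards [hIoo, hsmall] with ε hε hεr
  have hηr1 : η ε < x - x₀ := lt_of_lt_of_le hεr (le_trans (min_le_left _ _) (min_le_left _ _))
  have hηr2 : η ε < cmin * T / 2 :=
    lt_of_lt_of_le hεr (le_trans (min_le_left _ _) (min_le_right _ _))
  have hηr3 : η ε < δ / K := lt_of_lt_of_le hεr (min_le_right _ _)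
  have hest := key_estimate cL cR x₀ cmin M x t hcmin hcminL hcminR hMR hx ht
    (cfun ε) (η ε) (γ ε) (hcbd ε hε) (hηpos ε hε) (hceq ε hε) (hγt ε hε) (hγode ε hε)
    hηr1 (by rw [hT] at hηr2; exact hηr2)
  rw [Real.dist_eq]
  calc |γ ε 0 - (-cL * t + cL / cR * (x - x₀) + x₀)| ≤ K * η ε := hest
    _ < K * (δ / K) := mul_lt_mul_of_pos_left hηr3 hKpos
    _ = δ := by field_simp
end

section
/- Let c : ℝ₊ → ℝ be C¹ with 0 < c_min ≤ c(x) ≤ M, and let γ₁, γ₂ denote the characteristic flows of dγ/dτ = c(γ) and dγ/dτ = −c(γ) respectively, with γ_i(x,t,t) = x. Let u₀, v₀ : ℝ₊ → ℝ be C¹ and vanish on a neighborhood of 0, with the compatibility condition u₀(0) = v₀(0). Define v(x,t) = v₀(γ₂(x,t,0)), and define u(x,t) = u₀(γ₁(x,t,0)) if γ₁(x,t,·) stays in x ≥ 0 on [0,t], and u(x,t) = v(0,t₀) where t₀ is the time at which the backward characteristic through (x,t) reaches x = 0, otherwise. Then (u,v) is a solution of the mixed problem (∂_t + c∂_x)u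 = 0, (∂_t − c∂_x)v = 0 on (ℝ₊*)², with u(x,0) = u₀(x), v(x,0) = v₀(x), and boundary condition u(0,t) = v(0,t) for t ≥ 0. -/
/-- Explicit classical solution by characteristics of the reflection problem
`(∂_t + c ∂_x) u = 0`, `(∂_t − c ∂_x) v = 0` on `(ℝ₊*)²` with boundary condition
`u(0,t) = v(0,t)`. -/
theorem classical_solution_reflection_problem
    (c : ℝ → ℝ) (cmin M : ℝ) (hcmin : 0 < cmin)
    (hc : ContDiff ℝ 1 c) (hcbd : ∀ x : ℝ, cmin ≤ c x ∧ c x ≤ M)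
    (γ₁ γ₂ : ℝ → ℝ → ℝ → ℝ)
    (hγ₁t : ∀ x t : ℝ, γ₁ x t t = x)
    (hγ₂t : ∀ x t : ℝ, γ₂ x t t = x)
    (hγ₁ : ∀ x t τ : ℝ, HasDerivAt (γ₁ x t) (c (γ₁ x t τ)) τ)
    (hγ₂ : ∀ x t τ : ℝ, HasDerivAt (γ₂ x t) (-(c (γ₂ x t τ))) τ)
    (u₀ v₀ : ℝ → ℝ) (hu₀ : ContDiff ℝ 1 u₀) (hv₀ : ContDiff ℝ 1 v₀)
    (δ : ℝ) (hδ : 0 < δ)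
    (hu₀0 : ∀ x : ℝ, |x| < δ → u₀ x = 0) (hv₀0 : ∀ x : ℝ, |x| < δ → v₀ x = 0)
    (hcompat : u₀ 0 = v₀ 0)
    (t₀ : ℝ → ℝ → ℝ)
    (ht₀ : ∀ x t : ℝ, 0 ≤ x → ¬ (∀ τ ∈ Set.Icc 0 t, 0 ≤ γ₁ x t τ) →
      0 ≤ t₀ x t ∧ t₀ x t ≤ t ∧ γ₁ x t (t₀ x t) = 0)
    (u v : ℝ → ℝ → ℝ)
    (hv : ∀ x t : ℝ, v x t = v₀ (γ₂ x t 0))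
    (huI : ∀ x t : ℝ, (∀ τ ∈ Set.Icc 0 t, 0 ≤ γ₁ x t τ) → u x t = u₀ (γ₁ x t 0))
    (huII : ∀ x t : ℝ, ¬ (∀ τ ∈ Set.Icc 0 t, 0 ≤ γ₁ x t τ) → u x t = v 0 (t₀ x t)) :
    (∀ x t : ℝ, 0 < x → 0 < t →
      ∃ ux ut : ℝ, HasDerivAt (fun y => u y t) ux x ∧ HasDerivAt (fun s => u x s) ut t ∧
        ut + c x * ux = 0) ∧
    (∀ x t : ℝ, 0 < x → 0 < t →
      ∃ vx vt : ℝ, HasDerivAt (fun y => v y t) vx x ∧ HasDerivAt (fun s => v x s) vt t ∧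
        vt - c x * vx = 0) ∧
    (∀ x : ℝ, 0 ≤ x → u x 0 = u₀ x) ∧
    (∀ x : ℝ, 0 ≤ x → v x 0 = v₀ x) ∧
    (∀ t : ℝ, 0 ≤ t → u 0 t = v 0 t) := by
  have hcpos : ∀ x, 0 < c x := fun x => hcmin.trans_le (hcbd x).1
  have hcne : ∀ x, c x ≠ 0 := fun x => (hcpos x).ne'
  have hcont : Continuous fun z => (c z)⁻¹ := hc.continuous.inv₀ hcne
  set F : ℝ → ℝ := fun x => ∫ z in (0:ℝ)..x, (c z)⁻¹ with hFdef
  have hFd : ∀ x, HasDerivAt F (c x)⁻¹ x := fun x =>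
    intervalIntegral.integral_hasDerivAt_right (hcont.intervalIntegrable 0 x)
      (hcont.stronglyMeasurableAtFilter _ _) hcont.continuousAt
  have hF0 : F 0 = 0 := intervalIntegral.integral_same
  have hFmono : StrictMono F := by
    apply strictMono_of_deriv_pos
    intro x; rw [(hFd x).deriv]; exact inv_pos.mpr (hcpos x)
  -- F along the characteristics
  have key₁ : ∀ x t τ, F (γ₁ x t τ) = F x + (τ - t) := by
    intro x t τ
    have hd : ∀ s : ℝ, HasDerivAt (fun r => F (γ₁ x t r) - r) 0 s := by
      intro s
      have h1 := ((hFd (γ₁ x t s)).comp s (hγ₁ x t s)).sub (hasDerivAt_id s)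
      have h2 : (c (γ₁ x t s))⁻¹ * c (γ₁ x t s) - 1 = 0 := by
        rw [inv_mul_cancel₀ (hcne _)]; ring
      rw [h2] at h1; exact h1
    have hconst := is_const_of_deriv_eq_zero (fun s => ((hd s).differentiableAt))
      (fun s => (hd s).deriv) τ t
    rw [hγ₁t] at hconst; linarith
  have key₂ : ∀ x t τ, F (γ₂ x t τ) = F x - (τ - t) := by
    intro x t τ
    have hd : ∀ s : ℝ, HasDerivAt (fun r => F (γ₂ x t r) + r) 0 s := by
      intro s
      have h1 := ((hFd (γ₂ x t s)).comp s (hγ₂ x t s)).add (hasDerivAt_id s)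
      have h2 : (c (γ₂ x t s))⁻¹ * -c (γ₂ x t s) + 1 = 0 := by
        rw [mul_neg, inv_mul_cancel₀ (hcne _)]; ring
      rw [h2] at h1; exact h1
    have hconst := is_const_of_deriv_eq_zero (fun s => ((hd s).differentiableAt))
      (fun s => (hd s).deriv) τ t
    rw [hγ₂t] at hconst; linarith
  set G : ℝ → ℝ := γ₁ 0 0 with hGdef
  have hG0 : G 0 = 0 := hγ₁t 0 0
  have hGd : ∀ y, HasDerivAt G (c (G y)) y := hγ₁ 0 0
  have hFG : ∀ y, F (G y) = y := by
    intro y; have := key₁ 0 0 y; rw [hF0] at this; simpa using this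
  have hGF : ∀ z, G (F z) = z := fun z => hFmono.injective (by rw [hFG])
  have hGmono : StrictMono G := fun a b hab =>
    hFmono.lt_iff_lt.mp (by rw [hFG, hFG]; exact hab)
  have hγ₁eq : ∀ x t τ, γ₁ x t τ = G (F x + (τ - t)) := fun x t τ => by
    rw [← key₁ x t τ, hGF]
  have hγ₂eq : ∀ x t τ, γ₂ x t τ = G (F x - (τ - t)) := fun x t τ => by
    rw [← key₂ x t τ, hGF]
  have hGnn : ∀ s : ℝ, 0 ≤ s → 0 ≤ G s := by
    intro s hs
    rcases eq_or_lt_of_le hs with h | h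
    · rw [← h, hG0]
    · exact le_of_lt (hG0 ▸ hGmono h)
  have hregion : ∀ x t : ℝ, 0 ≤ t →
      ((∀ τ ∈ Set.Icc 0 t, 0 ≤ γ₁ x t τ) ↔ t ≤ F x) := by
    intro x t ht
    constructor
    · intro h
      have h0 := h 0 ⟨le_refl 0, ht⟩
      rw [hγ₁eq] at h0
      by_contra hcon
      push_neg at hcon
      have : G (F x + (0 - t)) < G 0 := hGmono (by linarith)
      rw [hG0] at this; linarith
    · intro h τ hτ
      rw [hγ₁eq]
      exact hGnn _ (by linarith [hτ.1, hτ.2])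
  have hv_eq : ∀ x t, v x t = v₀ (G (F x + t)) := by
    intro x t; rw [hv, hγ₂eq]; ring_nf
  set w : ℝ → ℝ := fun s => if 0 ≤ s then u₀ (G s) else v₀ (G (-s)) with hwdef
  set w' : ℝ → ℝ := fun s =>
    if 0 ≤ s then deriv u₀ (G s) * c (G s) else deriv v₀ (G (-s)) * (-c (G (-s))) with hw'def
  have hu_eq : ∀ x t, 0 ≤ x → 0 ≤ t → u x t = w (F x - t) := by
    intro x t hx ht
    by_cases hcase : ∀ τ ∈ Set.Icc 0 t, 0 ≤ γ₁ x t τ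
    · have hle : t ≤ F x := (hregion x t ht).mp hcase
      rw [huI x t hcase, hγ₁eq]
      simp only [hwdef]
      rw [if_pos (by linarith)]
      ring_nf
    · obtain ⟨h1, h2, h3⟩ := ht₀ x t hx hcase
      have ht₀eq : t₀ x t = t - F x := by
        have := key₁ x t (t₀ x t); rw [h3, hF0] at this; linarith
      have hlt : F x < t := by
        by_contra h; push_neg at h; exact hcase ((hregion x t ht).mpr h)
      rw [huII x t hcase, hv_eq, ht₀eq, hF0]
      simp only [hwdef]
      rw [if_neg (by intro h; linarith)]
      ring_nf
  have hwd : ∀ s, HasDerivAt w (w' s) s := by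
    intro s
    rcases lt_trichotomy s 0 with hs | hs | hs
    · have hGn : HasDerivAt (fun r : ℝ => G (-r)) (-c (G (-s))) s := by
        have := (hGd (-s)).comp s (hasDerivAt_neg s)
        rw [mul_neg_one] at this; exact this
      have hmain : HasDerivAt (fun r => v₀ (G (-r)))
          (deriv v₀ (G (-s)) * (-c (G (-s)))) s :=
        ((hv₀.differentiable one_ne_zero) (G (-s))).hasDerivAt.comp s hGn
      have hev : w =ᶠ[nhds s] fun r => v₀ (G (-r)) := by
        filter_upwards [Iio_mem_nhds hs] with r hr
        simp only [hwdef]; rw [if_neg (not_le.mpr hr)]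
      have := hmain.congr_of_eventuallyEq hev
      simpa only [hw'def, if_neg (not_le.mpr hs)] using this
    · subst hs
      have hGcont : Filter.Tendsto G (nhds 0) (nhds 0) := by
        have := (hGd 0).differentiableAt.continuousAt
        rwa [ContinuousAt, hG0] at this
      have hneg : Filter.Tendsto (fun r : ℝ => -r) (nhds (0:ℝ)) (nhds 0) := by
        simpa using (continuous_neg.tendsto (0:ℝ))
      have h1 : ∀ᶠ r in nhds (0:ℝ), G r ∈ Set.Ioo (-δ) δ :=
        hGcont (Ioo_mem_nhds (by linarith) hδ)
      have h2 : ∀ᶠ r in nhds (0:ℝ), G (-r) ∈ Set.Ioo (-δ) δ :=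
        (hGcont.comp hneg) (Ioo_mem_nhds (by linarith) hδ)
      have hev : w =ᶠ[nhds (0:ℝ)] fun _ => 0 := by
        filter_upwards [h1, h2] with r hr1 hr2
        by_cases h : 0 ≤ r
        · simp only [hwdef]; rw [if_pos h]; exact hu₀0 _ (abs_lt.mpr ⟨hr1.1, hr1.2⟩)
        · simp only [hwdef]; rw [if_neg h]; exact hv₀0 _ (abs_lt.mpr ⟨hr2.1, hr2.2⟩)
      have hd0 : HasDerivAt w 0 0 := (hasDerivAt_const (0:ℝ) (0:ℝ)).congr_of_eventuallyEq hev
      have hderiv0 : deriv u₀ 0 = 0 := by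
        have hev0 : u₀ =ᶠ[nhds (0:ℝ)] fun _ => 0 := by
          filter_upwards [Ioo_mem_nhds (show -δ < (0:ℝ) by linarith) hδ] with r hr
          exact hu₀0 _ (abs_lt.mpr ⟨hr.1, hr.2⟩)
        rw [hev0.deriv_eq]; simp
      have : w' 0 = 0 := by
        simp only [hw'def]; rw [if_pos le_rfl, hG0, hderiv0, zero_mul]
      rw [this]; exact hd0
    · have hmain : HasDerivAt (fun r => u₀ (G r)) (deriv u₀ (G s) * c (G s)) s :=
        ((hu₀.differentiable one_ne_zero) (G s)).hasDerivAt.comp s (hGd s)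
      have hev : w =ᶠ[nhds s] fun r => u₀ (G r) := by
        filter_upwards [Ioi_mem_nhds hs] with r hr
        simp only [hwdef]; rw [if_pos (le_of_lt hr)]
      have := hmain.congr_of_eventuallyEq hev
      simpa only [hw'def, if_pos (le_of_lt hs)] using this
  refine ⟨?_, ?_, ?_, ?_, ?_⟩
  · -- u solves the PDE
    intro x t hx ht
    refine ⟨w' (F x - t) * (c x)⁻¹, -w' (F x - t), ?_, ?_, ?_⟩
    · have hev : (fun y => u y t) =ᶠ[nhds x] fun y => w (F y - t) := by
        filter_upwards [Ioi_mem_nhds hx] with y hy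
        exact hu_eq y t (le_of_lt hy) ht.le
      have hd : HasDerivAt (fun y => w (F y - t)) (w' (F x - t) * (c x)⁻¹) x := by
        have := (hwd (F x - t)).comp x ((hFd x).sub_const t); exact this
      exact hd.congr_of_eventuallyEq hev
    · have hev : (fun s => u x s) =ᶠ[nhds t] fun s => w (F x - s) := by
        filter_upwards [Ioi_mem_nhds ht] with s hs
        exact hu_eq x s hx.le (le_of_lt hs)
      have hd : HasDerivAt (fun s => w (F x - s)) (w' (F x - t) * (-1)) t :=
        (hwd (F x - t)).comp t ((hasDerivAt_id t).const_sub (F x))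
      have := hd.congr_of_eventuallyEq hev
      simpa using this
    · field_simp [hcne x]; ring
  · -- v solves the PDE
    intro x t hx ht
    set A := F x + t with hA
    refine ⟨deriv v₀ (G A) * c (G A) * (c x)⁻¹, deriv v₀ (G A) * c (G A), ?_, ?_, ?_⟩
    · have heq : (fun y => v y t) = fun y => v₀ (G (F y + t)) :=
        funext fun y => hv_eq y t
      rw [heq]
      have hin : HasDerivAt (fun y => G (F y + t)) (c (G A) * (c x)⁻¹) x :=
        (hGd A).comp x ((hFd x).add_const t)
      have := ((hv₀.differentiable one_ne_zero) (G A)).hasDerivAt.comp x hin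
      rw [← mul_assoc] at this; exact this
    · have heq : (fun s => v x s) = fun s => v₀ (G (F x + s)) :=
        funext fun s => hv_eq x s
      rw [heq]
      have hin : HasDerivAt (fun s => G (F x + s)) (c (G A) * 1) t :=
        (hGd A).comp t ((hasDerivAt_id t).const_add (F x))
      have := ((hv₀.differentiable one_ne_zero) (G A)).hasDerivAt.comp t hin
      rw [mul_one] at this; exact this
    · field_simp [hcne x]; ring
  · -- initial condition for u
    intro x hx
    have hcase : ∀ τ ∈ Set.Icc (0:ℝ) 0, 0 ≤ γ₁ x 0 τ := by
      intro τ hτ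
      have : τ = 0 := le_antisymm hτ.2 hτ.1
      rw [this, hγ₁t]; exact hx
    rw [huI x 0 hcase, hγ₁t]
  · -- initial condition for v
    intro x hx
    rw [hv, hγ₂t]
  · -- boundary condition
    intro t ht
    rw [hu_eq 0 t le_rfl ht, hv_eq, hF0, zero_sub, zero_add]
    rcases eq_or_lt_of_le ht with h | h
    · simp only [hwdef]
      rw [← h, neg_zero, if_pos le_rfl, hG0]
      exact hcompat
    · simp only [hwdef]
      rw [if_neg (by intro hcon; linarith), neg_neg]
end
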